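/- Let R be a commutative ring and q ∈ R any invertible element. Then the elements σ1 and σ2 commute with each other in the quantum group O_q(SL_3): σ1 σ2 = σ2 σ1. -/

import Mathlib

noncomputable section

namespace QSL3

/-- Number of inversions of a permutation of `Fin 3`. -/
def len (σ : Equiv.Perm (Fin 3)) : ℕ :=
  (Finset.univ.filter fun p : Fin 3 × Fin 3 => p.1 < p.2 ∧ σ p.2 < σ p.1).card

variable (R : Type) [CommRing R] (q : Rˣ)

/-- The generator `X i j` of the free algebra. -/
def gen (i j : Fin 3) : FreeAlgebra R (Fin 3 × Fin 3) := FreeAlgebra.ι R (i, j)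

/-- The defining relations of the quantum group `O_q(SL_3)`. -/
inductive Rel : FreeAlgebra R (Fin 3 × Fin 3) → FreeAlgebra R (Fin 3 × Fin 3) → Prop
  | q_comm (i j l m : Fin 3) (h : (l < i ∧ j = m) ∨ (i = l ∧ m < j)) :
      Rel (gen R i j * gen R l m) (((q⁻¹ : Rˣ) : R) • (gen R l m * gen R i j))
  | comm (i j l m : Fin 3) (h : i < l ∧ m < j) :
      Rel (gen R i j * gen R l m) (gen R l m * gen R i j)
  | exch (i j l m : Fin 3) (h : l < i ∧ m < j) :
      Rel (gen R i j * gen R l m)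
        (gen R l m * gen R i j - ((q : R) - ((q⁻¹ : Rˣ) : R)) • (gen R i m * gen R l j))
  | det : Rel (∑ σ : Equiv.Perm (Fin 3),
      (-(q : R)) ^ len σ • (gen R (σ 0) 0 * gen R (σ 1) 1 * gen R (σ 2) 2)) 1

/-- The quantum group `O_q(SL_3)`. -/
def Oq := RingQuot (Rel R q)

instance : Ring (Oq R q) := inferInstanceAs (Ring (RingQuot (Rel R q)))
instance : Algebra R (Oq R q) := inferInstanceAs (Algebra R (RingQuot (Rel R q)))

/-- The generator `X i j` of `O_q(SL_3)`. -/
def X (i j : Fin 3) : Oq R q := RingQuot.mkAlgHom R (Rel R q) (gen R i j)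

/-- `σ1`, the trace of the matrix of generators. -/
def s1 : Oq R q := X R q 0 0 + X R q 1 1 + X R q 2 2

/-- `σ2`, the sum of the principal 2×2 quantum minors. -/
def s2 : Oq R q :=
  (X R q 0 0 * X R q 1 1 - (q : R) • (X R q 0 1 * X R q 1 0))
  + (X R q 0 0 * X R q 2 2 - (q : R) • (X R q 0 2 * X R q 2 0))
  + (X R q 1 1 * X R q 2 2 - (q : R) • (X R q 1 2 * X R q 2 1))

/-- `q` is a root of unity of order `N`. -/
def IsRootOfOrder (x : R) (N : ℕ) : Prop :=
  x ^ N = 1 ∧ ∀ k : ℕ, 0 < k → k < N → x ^ k ≠ 1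

end QSL3

/-- The power sum polynomials `P^(N)`. -/
def powerSum : ℕ → MvPolynomial (Fin 2) ℤ
  | 0 => 3
  | 1 => MvPolynomial.X 0
  | 2 => MvPolynomial.X 0 ^ 2 - 2 * MvPolynomial.X 1
  | (n+3) => MvPolynomial.X 0 * powerSum (n+2) - MvPolynomial.X 1 * powerSum (n+1) + powerSum n

/-- Evaluation of a polynomial in two (commuting) variables at a pair of elements of a
possibly noncommutative ring, sending the monomial `x^a * y^b` to `u^a * v^b`. -/
def evalP {A : Type*} [Ring A] (p : MvPolynomial (Fin 2) ℤ) (u v : A) : A :=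
  ∑ m ∈ p.support, p.coeff m • (u ^ m 0 * v ^ m 1)

/- For `i < j` the entries `X i i, X i j, X j i, X j j` satisfy the relations of `O_q(M_2)`, whose
quantum determinant commutes with the diagonal entries. Writing `σ2` as the sum of the three
principal quantum minors, six of the nine commutators `[X k k, minor]` in `[σ1, σ2]` therefore
vanish. The remaining three, `[X₃₃, D₁₂] + [X₂₂, D₁₃] + [X₁₁, D₂₃]`, cancel once every monomial is
reordered, column index decreasing, by the commutation and exchange relations. -/

namespace QSL3

section QuantumMatrix

variable {R A : Type*} [CommRing R] [Ring A] [Algebra R A] (q : Rˣ)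

-- The relations of `O_q(M_2)` for the matrix `[[a, b], [c, d]]`.
structure IsQuantumMatrix (a b c d : A) : Prop where
  b_mul_a : b * a = ((q⁻¹ : Rˣ) : R) • (a * b)
  c_mul_a : c * a = ((q⁻¹ : Rˣ) : R) • (a * c)
  d_mul_b : d * b = ((q⁻¹ : Rˣ) : R) • (b * d)
  d_mul_c : d * c = ((q⁻¹ : Rˣ) : R) • (c * d)
  c_mul_b : c * b = b * c
  d_mul_a : d * a = a * d - ((q : R) - ((q⁻¹ : Rˣ) : R)) • (c * b)

def qdet (a b c d : A) : A := a * d - (q : R) • (b * c)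

variable {q} {a b c d : A}

theorem IsQuantumMatrix.commute_qdet_left (h : IsQuantumMatrix q a b c d) :
    Commute a (qdet q a b c d) := by
  have hbca : b * (c * a) = ((q⁻¹ : Rˣ) : R) • ((q⁻¹ : Rˣ) : R) • (a * (b * c)) := by
    rw [h.c_mul_a, mul_smul_comm, ← mul_assoc, h.b_mul_a, smul_mul_assoc, mul_assoc]
  simp only [Commute, SemiconjBy, qdet, mul_sub, sub_mul, mul_smul_comm, smul_mul_assoc,
    mul_assoc, h.d_mul_a, hbca, h.c_mul_b]
  have hq := q.mul_inv
  match_scalars <;> grind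

theorem IsQuantumMatrix.commute_qdet_right (h : IsQuantumMatrix q a b c d) :
    Commute d (qdet q a b c d) := by
  have hdad : d * (a * d) = a * (d * d) - ((q : R) - ((q⁻¹ : Rˣ) : R)) • (b * (c * d)) := by
    rw [← mul_assoc, h.d_mul_a, h.c_mul_b, sub_mul, smul_mul_assoc, mul_assoc, mul_assoc]
  have hdbc : d * (b * c) = ((q⁻¹ : Rˣ) : R) • ((q⁻¹ : Rˣ) : R) • (b * (c * d)) := by
    rw [← mul_assoc, h.d_mul_b, smul_mul_assoc, mul_assoc, h.d_mul_c, mul_smul_comm]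
  simp only [Commute, SemiconjBy, qdet, mul_sub, sub_mul, mul_smul_comm, smul_mul_assoc,
    mul_assoc, hdad, hdbc]
  have hq := q.mul_inv
  match_scalars <;> grind

end QuantumMatrix

variable {R : Type} [CommRing R] {q : Rˣ}

theorem X_mul_X_of_q_comm {i j l m : Fin 3} (h : (l < i ∧ j = m) ∨ (i = l ∧ m < j)) :
    X R q i j * X R q l m = ((q⁻¹ : Rˣ) : R) • (X R q l m * X R q i j) := by
  have rel := RingQuot.mkAlgHom_rel R (Rel.q_comm (q := q) i j l m h)
  rwa [map_mul, map_smul, map_mul] at rel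

theorem X_mul_X_of_comm {i j l m : Fin 3} (h : i < l ∧ m < j) :
    X R q i j * X R q l m = X R q l m * X R q i j := by
  have rel := RingQuot.mkAlgHom_rel R (Rel.comm (q := q) i j l m h)
  rwa [map_mul, map_mul] at rel

theorem X_mul_X_of_exch {i j l m : Fin 3} (h : l < i ∧ m < j) :
    X R q i j * X R q l m =
      X R q l m * X R q i j - ((q : R) - ((q⁻¹ : Rˣ) : R)) • (X R q i m * X R q l j) := by
  have rel := RingQuot.mkAlgHom_rel R (Rel.exch (q := q) i j l m h)
  rwa [map_mul, map_sub, map_smul, map_mul, map_mul] at rel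

theorem isQuantumMatrix_X {i j : Fin 3} (hij : i < j) :
    IsQuantumMatrix q (X R q i i) (X R q i j) (X R q j i) (X R q j j) where
  b_mul_a := X_mul_X_of_q_comm (.inr ⟨rfl, hij⟩)
  c_mul_a := X_mul_X_of_q_comm (.inl ⟨hij, rfl⟩)
  d_mul_b := X_mul_X_of_q_comm (.inl ⟨hij, rfl⟩)
  d_mul_c := X_mul_X_of_q_comm (.inr ⟨rfl, hij⟩)
  c_mul_b := (X_mul_X_of_comm ⟨hij, hij⟩).symm
  d_mul_a := X_mul_X_of_exch ⟨hij, hij⟩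

theorem X_mul_X_reorder_exch {i j l m : Fin 3} (h : l < i ∧ m < j) :
    X R q l m * X R q i j =
      X R q i j * X R q l m + ((q : R) - ((q⁻¹ : Rˣ) : R)) • (X R q i m * X R q l j) := by
  rw [X_mul_X_of_exch h, sub_add_cancel]

theorem X_mul_X_mul_reorder_comm {i j l m : Fin 3} (h : i < l ∧ m < j) (t : Oq R q) :
    X R q l m * (X R q i j * t) = X R q i j * (X R q l m * t) := by
  rw [← mul_assoc, ← X_mul_X_of_comm h, mul_assoc]

theorem X_mul_X_mul_reorder_exch {i j l m : Fin 3} (h : l < i ∧ m < j) (t : Oq R q) :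
    X R q l m * (X R q i j * t) = X R q i j * (X R q l m * t)
      + ((q : R) - ((q⁻¹ : Rˣ) : R)) • (X R q i m * (X R q l j * t)) := by
  rw [← mul_assoc, X_mul_X_reorder_exch h, add_mul, smul_mul_assoc, mul_assoc, mul_assoc]

variable (R q) in
def minor (i j : Fin 3) : Oq R q := qdet q (X R q i i) (X R q i j) (X R q j i) (X R q j j)

theorem commute_X_minor_left {i j : Fin 3} (hij : i < j) : Commute (X R q i i) (minor R q i j) :=
  (isQuantumMatrix_X hij).commute_qdet_left

theorem commute_X_minor_right {i j : Fin 3} (hij : i < j) : Commute (X R q j j) (minor R q i j) :=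
  (isQuantumMatrix_X hij).commute_qdet_right

theorem sum_commutator_X_minor_eq_zero :
    (X R q 2 2 * minor R q 0 1 - minor R q 0 1 * X R q 2 2)
      + (X R q 1 1 * minor R q 0 2 - minor R q 0 2 * X R q 1 1)
      + (X R q 0 0 * minor R q 1 2 - minor R q 1 2 * X R q 0 0) = 0 := by
  simp only [minor, qdet, mul_sub, sub_mul, smul_mul_assoc, mul_smul_comm, mul_assoc]
  simp (disch := decide) only [← X_mul_X_of_comm, X_mul_X_mul_reorder_comm,
    X_mul_X_reorder_exch, X_mul_X_mul_reorder_exch, mul_add, mul_smul_comm, smul_add, smul_smul]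
  have hq := q.mul_inv
  match_scalars <;> grind

theorem s2_eq_minor_add_minor_add_minor : s2 R q = minor R q 0 1 + minor R q 0 2 + minor R q 1 2 :=
  rfl

end QSL3

/-- For any commutative ring `R` and any invertible `q ∈ R`, the elements
`σ1` and `σ2` commute in `O_q(SL_3)`. -/
theorem s1_mul_s2_comm (R : Type) [CommRing R] (q : Rˣ) :
    QSL3.s1 R q * QSL3.s2 R q = QSL3.s2 R q * QSL3.s1 R q := by
  open QSL3 in
  have h01 : (0 : Fin 3) < 1 := by decide
  have h02 : (0 : Fin 3) < 2 := by decide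
  have h12 : (1 : Fin 3) < 2 := by decide
  rw [← sub_eq_zero, ← sum_commutator_X_minor_eq_zero (R := R) (q := q), s1,
    s2_eq_minor_add_minor_add_minor]
  simp only [mul_add, add_mul, (commute_X_minor_left (q := q) h01).eq,
    (commute_X_minor_left (q := q) h02).eq, (commute_X_minor_left (q := q) h12).eq,
    (commute_X_minor_right (q := q) h01).eq, (commute_X_minor_right (q := q) h02).eq,
    (commute_X_minor_right (q := q) h12).eq]
  abel

end
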